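/- arXiv:1705.01241 — 2 statements merged into one kernel-verified Lean document; each statement's English description precedes it below -/
import Mathlib

section
/- For n ≥ 1, the degenerate Eulerian polynomial satisfies (t-1) A_{n,λ}(t) = Σ_{k=0}^{n-1} C(n,k) A_{k,λ}(t) (t-1)_{n-k,λ}. -/
/-!
Take the `n`-th coefficient of the defining identity. A product of exponential generating
functions has the binomial convolution `∑ C(n,k) a_k b_{n-k}` as its coefficients, and since
`n ≥ 1` the right-hand side contributes nothing. Subtracting `t` only changes the constant
term of the second factor, to `(t-1)_{0,λ} - t = 1 - t`, so the `k = n` summand is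
`(1 - t) A_{n,λ}(t)` while the others are the terms of the claimed sum.
-/

open Polynomial

/-- The `λ`-falling factorial `(t-1)_{m,λ} = (t-1)(t-1-λ)⋯(t-1-(m-1)λ)` as a
polynomial in `t` over `ℚ`. -/
noncomputable def degFallTsub1 (lam : ℚ) (m : ℕ) : Polynomial ℚ :=
  ∏ i ∈ Finset.range m, ((X : Polynomial ℚ) - 1 - C ((i : ℚ) * lam))

open Finset
open scoped Nat

section ExponentialGeneratingFunction

variable {R : Type*} [CommRing R] [Algebra ℚ R]

noncomputable def egf (a : ℕ → R) : PowerSeries R :=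
  PowerSeries.mk fun n => (n ! : ℚ)⁻¹ • a n

theorem coeff_egf_mul_egf (a b : ℕ → R) (n : ℕ) :
    PowerSeries.coeff n (egf a * egf b)
      = (n ! : ℚ)⁻¹ • ∑ k ∈ range (n + 1), n.choose k • (a k * b (n - k)) := by
  rw [PowerSeries.coeff_mul, Nat.sum_antidiagonal_eq_sum_range_succ_mk, smul_sum]
  refine sum_congr rfl fun k hk => ?_
  have hkn : k ≤ n := Nat.lt_succ_iff.mp (mem_range.mp hk)
  simp only [egf, PowerSeries.coeff_mk, smul_mul_smul_comm, ← Nat.cast_smul_eq_nsmul ℚ, smul_smul,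
    Nat.cast_choose ℚ hkn]
  congr 1
  field_simp

theorem egf_sub_C (a : ℕ → R) (c : R) :
    egf a - PowerSeries.C c = egf (Function.update a 0 (a 0 - c)) := by
  ext (_ | n) <;> simp [egf]

end ExponentialGeneratingFunction

theorem degFallTsub1_zero (lam : ℚ) : degFallTsub1 lam 0 = 1 :=
  prod_range_zero _

/-- For the degenerate Eulerian polynomials `A_{n,λ}(t)` (defined by
`(Σ_n A_{n,λ}(t) x^n/n!) · ((1+λx)^{(t-1)/λ} - t) = 1 - t`) and `n ≥ 1`:
`(t-1)·A_{n,λ}(t) = Σ_{k=0}^{n-1} C(n,k) A_{k,λ}(t) (t-1)_{n-k,λ}`. -/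
theorem degenerate_eulerian_rec (lam : ℚ) (A : ℕ → Polynomial ℚ)
    (hA : (PowerSeries.mk fun n => (n.factorial : ℚ)⁻¹ • A n) *
        ((PowerSeries.mk fun m => (m.factorial : ℚ)⁻¹ • degFallTsub1 lam m)
          - PowerSeries.C (X : Polynomial ℚ))
      = PowerSeries.C ((1 - X : Polynomial ℚ))) :
    ∀ n, 1 ≤ n →
      ((X : Polynomial ℚ) - 1) * A n
        = ∑ k ∈ Finset.range n, (n.choose k) • (A k * degFallTsub1 lam (n - k)) := by
  intro n hn
  change egf A * (egf (degFallTsub1 lam) - PowerSeries.C X) = PowerSeries.C (1 - X) at hA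
  have hcoeff := congrArg (PowerSeries.coeff n) hA
  rw [egf_sub_C, coeff_egf_mul_egf, PowerSeries.coeff_C, if_neg (by omega), smul_eq_zero,
    or_iff_right (by positivity), sum_range_succ, Nat.choose_self, Nat.sub_self,
    Function.update_self, degFallTsub1_zero] at hcoeff
  have hlow : ∀ k ∈ range n, n.choose k • (A k * Function.update (degFallTsub1 lam) 0
      (1 - X) (n - k)) = n.choose k • (A k * degFallTsub1 lam (n - k)) := fun k hk => by
    rw [Function.update_of_ne (by have := mem_range.mp hk; omega)]
  rw [sum_congr rfl hlow] at hcoeff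
  linear_combination -hcoeff
end

section
/- For all n ≥ 0, A_{n,λ}(t) = Σ_{k=0}^n λ^{n-k} S_1(n,k) H_k(t) (t-1)^k, where H_k(t) are the Frobenius–Euler numbers at parameter t. -/
/-- The formal power series `log(1+t) = Σ_{m≥1} (-1)^{m+1} t^m / m` over ℚ. -/
noncomputable def logOneAdd : PowerSeries ℚ :=
  PowerSeries.mk fun m => if m = 0 then 0 else (-1 : ℚ) ^ (m + 1) / m

/-- The signed Stirling numbers of the first kind. -/
noncomputable def S1 (n k : ℕ) : ℚ :=
  (n.factorial : ℚ) * PowerSeries.coeff n ((k.factorial : ℚ)⁻¹ • logOneAdd ^ k)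

/-!
Put `u = log(1 + λx)/λ`. The degenerate exponential `(1 + λx)^{(t-1)/λ}` equals `exp((t-1)u)`:
both are the solution of `(1 + λx) f' = (t-1) f` with `f(0) = 1`. Substituting `y = (t-1)u` into
`(Σ_k H_k y^k/k!)(e^y - t) = 1 - t` and cancelling the unit `(1 + λx)^{(t-1)/λ} - t` gives
`Σ_n A_{n,λ}(t) x^n/n! = Σ_k H_k (t-1)^k u^k/k!`, and the coefficient of `x^n` in `u^k/k!` is
`λ^{n-k} S₁(n,k)/n!`.
-/

open PowerSeries Finset

namespace PowerSeries

variable {R : Type*} [CommRing R]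

theorem coeff_pow_eq_zero_of_lt {f : R⟦X⟧} (hf : constantCoeff f = 0) {n k : ℕ} (h : n < k) :
    coeff n (f ^ k) = 0 :=
  coeff_of_lt_order n <| (Nat.cast_lt.2 h).trans_le (le_order_pow_of_constantCoeff_eq_zero k hf)

theorem coeff_subst_eq_sum {a : R⟦X⟧} (ha : constantCoeff a = 0) (f : R⟦X⟧) (n : ℕ) :
    coeff n (f.subst a) = ∑ k ∈ range (n + 1), coeff k f * coeff n (a ^ k) := by
  rw [coeff_subst' (HasSubst.of_constantCoeff_zero' ha)]
  refine finsum_eq_sum_of_support_subset _ fun k hk => ?_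
  by_contra hkn
  rw [coe_range, Set.mem_Iio, not_lt, Nat.succ_le_iff] at hkn
  exact hk (by simp only [smul_eq_mul, coeff_pow_eq_zero_of_lt ha hkn, mul_zero])

theorem coeff_X_mul_derivative (f : R⟦X⟧) (n : ℕ) :
    coeff n (X * d⁄dX R f) = n * coeff n f := by
  cases n with
  | zero => simp
  | succ n => rw [coeff_succ_X_mul, coeff_derivative, mul_comm]; push_cast; ring

theorem succ_mul_coeff_succ_of_derivative {lam c : R} {f : R⟦X⟧}
    (hf : (1 + C lam * X) * d⁄dX R f = C c * f) (m : ℕ) :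
    (m + 1) * coeff (m + 1) f = (c - m * lam) * coeff m f := by
  have h := congrArg (coeff m) hf
  rw [add_mul, one_mul, mul_assoc, map_add, coeff_C_mul, coeff_C_mul, coeff_X_mul_derivative,
    coeff_derivative] at h
  linear_combination h

theorem eq_of_succ_mul_coeff_succ [IsDomain R] [CharZero R] {r : ℕ → R} {f g : R⟦X⟧}
    (hf : ∀ m, (m + 1) * coeff (m + 1) f = r m * coeff m f)
    (hg : ∀ m, (m + 1) * coeff (m + 1) g = r m * coeff m g)
    (h0 : coeff 0 f = coeff 0 g) : f = g := by
  ext m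
  induction m with
  | zero => exact h0
  | succ m ih =>
    refine mul_left_cancel₀ (Nat.cast_add_one_ne_zero m) ?_
    rw [hf, hg, ih]

theorem one_add_X_mul_derivative_log (A : Type*) [CommRing A] [Algebra ℚ A] :
    (1 + X) * d⁄dX A (log A) = 1 := by
  rw [deriv_log]
  ext n
  cases n with
  | zero => simp
  | succ n => simp [add_mul, coeff_succ_X_mul, pow_succ]

end PowerSeries

theorem logOneAdd_eq_log : logOneAdd = log ℚ := by
  ext n
  simp [logOneAdd]

noncomputable def logOneAddDivX : ℚ⟦X⟧ :=
  mk fun n => coeff (n + 1) logOneAdd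

theorem X_mul_logOneAddDivX : X * logOneAddDivX = logOneAdd := by
  ext n
  cases n with
  | zero => simp [logOneAdd]
  | succ n => rw [coeff_succ_X_mul, logOneAddDivX, coeff_mk]

/-- `log (1 + λX) / λ`, written so that it is also defined (and equal to `X`) at `λ = 0`. -/
noncomputable def degenerateLog (lam : ℚ) : ℚ⟦X⟧ :=
  X * rescale lam logOneAddDivX

theorem constantCoeff_degenerateLog (lam : ℚ) : constantCoeff (degenerateLog lam) = 0 := by
  simp [degenerateLog]

theorem coeff_degenerateLog_pow (lam : ℚ) (n k : ℕ) :
    coeff n (degenerateLog lam ^ k) = lam ^ (n - k) * coeff n (logOneAdd ^ k) := by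
  rw [degenerateLog, ← X_mul_logOneAddDivX, mul_pow, mul_pow, ← map_pow, coeff_X_pow_mul',
    coeff_X_pow_mul', coeff_rescale]
  split_ifs <;> simp

theorem derivative_degenerateLog (lam : ℚ) :
    d⁄dX ℚ (degenerateLog lam) = rescale lam (d⁄dX ℚ logOneAdd) := by
  ext m
  rw [coeff_derivative, degenerateLog, coeff_succ_X_mul, coeff_rescale, coeff_rescale,
    coeff_derivative, logOneAddDivX, coeff_mk]
  ring

theorem one_add_mul_X_mul_derivative_degenerateLog (lam : ℚ) :
    (1 + C lam * X) * d⁄dX ℚ (degenerateLog lam) = 1 := by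
  rw [derivative_degenerateLog, ← rescale_X, ← map_one (rescale lam), ← map_add, ← map_mul,
    logOneAdd_eq_log, one_add_X_mul_derivative_log, map_one]

/-- `(1 + λX)^(c/λ)`; its coefficients are the degenerate falling factorials `(c)_{m,λ}/m!`. -/
noncomputable def degenerateExp (lam c : ℚ) : ℚ⟦X⟧ :=
  mk fun m => (m.factorial : ℚ)⁻¹ * ∏ i ∈ range m, (c - i * lam)

theorem succ_mul_coeff_succ_degenerateExp (lam c : ℚ) (m : ℕ) :
    (m + 1) * coeff (m + 1) (degenerateExp lam c) =
      (c - m * lam) * coeff m (degenerateExp lam c) := by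
  simp only [degenerateExp, coeff_mk, prod_range_succ, Nat.factorial_succ]
  generalize ∏ i ∈ range m, (c - i * lam) = P
  push_cast
  field_simp

theorem succ_mul_coeff_succ_exp_subst_degenerateLog (lam c : ℚ) (m : ℕ) :
    (m + 1) * coeff (m + 1) ((exp ℚ).subst (c • degenerateLog lam)) =
      (c - m * lam) * coeff m ((exp ℚ).subst (c • degenerateLog lam)) := by
  refine succ_mul_coeff_succ_of_derivative ?_ m
  have ha : HasSubst (c • degenerateLog lam) :=
    HasSubst.of_constantCoeff_zero' (by simp [constantCoeff_degenerateLog])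
  rw [derivative_subst ha, derivative_exp, Derivation.map_smul,
    smul_eq_C_mul (d⁄dX ℚ (degenerateLog lam)) c]
  linear_combination (C c * (exp ℚ).subst (c • degenerateLog lam)) *
    one_add_mul_X_mul_derivative_degenerateLog lam

theorem degenerateExp_eq_exp_subst (lam c : ℚ) :
    degenerateExp lam c = (exp ℚ).subst (c • degenerateLog lam) := by
  refine eq_of_succ_mul_coeff_succ (succ_mul_coeff_succ_degenerateExp lam c)
    (succ_mul_coeff_succ_exp_subst_degenerateLog lam c) ?_
  rw [coeff_subst_eq_sum (by simp [constantCoeff_degenerateLog])]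
  simp [degenerateExp]

/-- For `t ≠ 1`, the degenerate Eulerian numbers `A_{n,λ}(t)` (defined by
`(Σ_n A_{n,λ}(t) x^n/n!)·((1+λx)^{(t-1)/λ} - t) = 1-t`, with
`(1+λx)^{(t-1)/λ} = Σ_m (t-1)_{m,λ} x^m/m!`) satisfy
`A_{n,λ}(t) = Σ_{k=0}^n λ^{n-k} S₁(n,k) H_k(t)(t-1)^k`, where `H_k(t)` are the
Frobenius–Euler numbers given by `(1-t)/(e^x - t) = Σ_k H_k(t) x^k/k!`. -/
theorem degenerate_eulerian_frobenius_euler (lam t : ℚ) (ht : t ≠ 1)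
    (A H : ℕ → ℚ)
    (hA : (PowerSeries.mk fun n => (n.factorial : ℚ)⁻¹ * A n) *
        ((PowerSeries.mk fun m =>
            (m.factorial : ℚ)⁻¹ * ∏ i ∈ Finset.range m, (t - 1 - (i : ℚ) * lam))
          - PowerSeries.C t)
      = PowerSeries.C (1 - t))
    (hH : (PowerSeries.mk fun k => (k.factorial : ℚ)⁻¹ * H k) *
        (PowerSeries.exp ℚ - PowerSeries.C t) = PowerSeries.C (1 - t)) :
    ∀ n, A n = ∑ k ∈ Finset.range (n + 1), lam ^ (n - k) * S1 n k * H k * (t - 1) ^ k := by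
  set F := PowerSeries.mk fun k => (k.factorial : ℚ)⁻¹ * H k
  set a := (t - 1) • degenerateLog lam
  have ha : constantCoeff a = 0 := by simp [a, constantCoeff_degenerateLog]
  have ha' : HasSubst a := HasSubst.of_constantCoeff_zero' ha
  have hFa : F.subst a * (degenerateExp lam (t - 1) - C t) = C (1 - t) := by
    have h := congrArg (subst a) hH
    rwa [subst_mul ha', subst_sub ha', subst_C, subst_C, ← degenerateExp_eq_exp_subst] at h
  have hunit : IsUnit (degenerateExp lam (t - 1) - C t) := by
    rw [isUnit_iff_constantCoeff]
    simp [degenerateExp, sub_ne_zero.2 ht.symm]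
  have hAF : (PowerSeries.mk fun n => (n.factorial : ℚ)⁻¹ * A n) = F.subst a :=
    hunit.mul_right_cancel (hA.trans hFa.symm)
  intro n
  have hn := congrArg (coeff n) hAF
  rw [coeff_mk, coeff_subst_eq_sum ha, inv_mul_eq_iff_eq_mul₀ (by positivity)] at hn
  rw [hn, mul_sum]
  refine sum_congr rfl fun k _ => ?_
  rw [coeff_mk, smul_pow, coeff_smul, coeff_degenerateLog_pow, S1, coeff_smul, smul_eq_mul,
    smul_eq_mul]
  ring
end
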